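/- arXiv:2509.23365 — 2 statements merged into one kernel-verified Lean document; each statement's English description precedes it below -/
import Mathlib

section
/- Suppose all coordinates of μ ∈ ℝ^V equal a common value μ̄ ∈ ℝ, so that ξ_u(μ) = λ(1{u ∈ N_c} + μ̄·d_u) for all u ∈ V. Then for every v ∈ V, the gradient of the permutation-averaged coconut loss satisfies ∂L^coco/∂μ_v (μ) = (1/(n√K)) · ( −d_p + Σ_{u ∈ N_{c+1}} d_u·exp(ξ_u(μ)) / (exp(ξ_+(μ)) + n − |N_{c+1}|) ); in particular this value is the same for every v ∈ V. -/
open Finset Filter Matrix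

variable {V : Type*}

/-- `ball E r j` : set of vertices reachable from `r` within `j` steps along edges in `E`. -/
def ball [Fintype V] [DecidableEq V] (E : Finset (V × V)) (r : V) : ℕ → Finset V
  | 0 => {r}
  | j + 1 => Finset.univ.filter fun v => v ∈ ball E r j ∨ ∃ u ∈ ball E r j, (u, v) ∈ E

/-- in-degree of `v` restricted to sources in `N_c`. -/
def degc [Fintype V] [DecidableEq V] (E : Finset (V × V)) (r : V) (c : ℕ) (v : V) : ℕ :=
  ((ball E r c).filter fun u => (u, v) ∈ E).card

/-- λ = 1/√K with K = |N_c|. -/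
noncomputable def lamc [Fintype V] [DecidableEq V] (E : Finset (V × V)) (r : V) (c : ℕ) : ℝ :=
  1 / Real.sqrt ((ball E r c).card : ℝ)

/-- the logit ξ_v(μ). -/
noncomputable def xi [Fintype V] [DecidableEq V] (E : Finset (V × V)) (r : V) (c : ℕ)
    (μ : V → ℝ) (v : V) : ℝ :=
  lamc E r c * (if v ∈ ball E r c then 1 else 0)
    + lamc E r c * ∑ u ∈ (ball E r c).filter (fun u => (u, v) ∈ E), μ u

/-- BFS loss. -/
noncomputable def bfsLoss [Fintype V] [DecidableEq V] (E : Finset (V × V)) (r : V) (c : ℕ)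
    (μ : V → ℝ) : ℝ :=
  - Real.log ((∑ v ∈ ball E r (c + 1), Real.exp (xi E r c μ v)) /
      ∑ v : V, Real.exp (xi E r c μ v))

/-- edge set of the permuted instance. -/
def permE [Fintype V] [DecidableEq V] (π : Equiv.Perm V) (E : Finset (V × V)) :
    Finset (V × V) :=
  E.image fun e => (π e.1, π e.2)

/-- permutation-averaged BFS loss. -/
noncomputable def avgBfsLoss [Fintype V] [DecidableEq V] (E : Finset (V × V)) (r : V) (c : ℕ)
    (μ : V → ℝ) : ℝ :=
  ((Nat.factorial (Fintype.card V) : ℝ))⁻¹ *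
    ∑ π : Equiv.Perm V, bfsLoss (permE π E) (π r) c μ

/-- coconut loss with target `p`. -/
noncomputable def cocoLoss [Fintype V] [DecidableEq V] (E : Finset (V × V)) (r : V) (c : ℕ)
    (p : V) (μ : V → ℝ) : ℝ :=
  - Real.log (Real.exp (xi E r c μ p) / ∑ v : V, Real.exp (xi E r c μ v))

/-- permutation-averaged coconut loss. -/
noncomputable def avgCocoLoss [Fintype V] [DecidableEq V] (E : Finset (V × V)) (r : V) (c : ℕ)
    (p : V) (μ : V → ℝ) : ℝ :=
  ((Nat.factorial (Fintype.card V) : ℝ))⁻¹ *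
    ∑ π : Equiv.Perm V, cocoLoss (permE π E) (π r) c (π p) μ

/-- the scalar function F. -/
noncomputable def Fc [Fintype V] [DecidableEq V] (E : Finset (V × V)) (r : V) (c : ℕ)
    (x : ℝ) : ℝ :=
  (∑ u ∈ ball E r (c + 1), (degc E r c u : ℝ) *
      Real.exp (lamc E r c * ((if u ∈ ball E r c then 1 else 0) + x * (degc E r c u : ℝ))))
    / ((∑ u ∈ ball E r (c + 1),
        Real.exp (lamc E r c * ((if u ∈ ball E r c then 1 else 0) + x * (degc E r c u : ℝ))))
      + ((Fintype.card V : ℝ) - ((ball E r (c + 1)).card : ℝ)))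

/-!
Relabelling the vertices by `π` turns the coconut loss of the permuted instance into the loss of
the original instance evaluated at `μ ∘ π`, so the `v`-th partial derivative of the `π`-th term is
the `π⁻¹ v`-th partial derivative of the original loss at `μ ∘ π`. When `μ` is constant,
`μ ∘ π = μ`, and since `π⁻¹ v` runs through every vertex equally often, the averaged gradient
component is `1 / n` times the sum of all partial derivatives of the original loss. Summing the
softmax gradient over all coordinates collapses each `∂ξ_w/∂μ_u` into `λ d_w`; outside `N_{c+1}`
the logits vanish, which contributes the `n - |N_{c+1}|` to the partition function.
-/

section Relabelling

variable [Fintype V] [DecidableEq V]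

lemma mem_permE (π : Equiv.Perm V) (E : Finset (V × V)) (a b : V) :
    (π a, π b) ∈ permE π E ↔ (a, b) ∈ E := by
  simp [permE, Prod.ext_iff]

lemma ball_permE (π : Equiv.Perm V) (E : Finset (V × V)) (r : V) (j : ℕ) :
    ball (permE π E) (π r) j = (ball E r j).image π := by
  induction j with
  | zero => simp [ball]
  | succ j ih =>
    ext v
    obtain ⟨w, rfl⟩ := π.surjective v
    simp only [ball, ih, Finset.mem_filter, Finset.mem_univ, true_and,
      π.injective.mem_finset_image, Finset.exists_mem_image, mem_permE]

lemma filter_ball_permE (π : Equiv.Perm V) (E : Finset (V × V)) (r : V) (c : ℕ) (w : V) :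
    (ball (permE π E) (π r) c).filter (fun u => (u, π w) ∈ permE π E)
      = ((ball E r c).filter fun u => (u, w) ∈ E).image π := by
  ext u
  obtain ⟨u, rfl⟩ := π.surjective u
  simp [ball_permE, mem_permE, π.injective.mem_finset_image]

lemma lamc_permE (π : Equiv.Perm V) (E : Finset (V × V)) (r : V) (c : ℕ) :
    lamc (permE π E) (π r) c = lamc E r c := by
  rw [lamc, lamc, ball_permE, Finset.card_image_of_injective _ π.injective]

lemma xi_permE (π : Equiv.Perm V) (E : Finset (V × V)) (r : V) (c : ℕ) (μ : V → ℝ) (w : V) :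
    xi (permE π E) (π r) c μ (π w) = xi E r c (μ ∘ π) w := by
  rw [xi, xi, lamc_permE, filter_ball_permE, Finset.sum_image fun a _ b _ h => π.injective h]
  simp only [ball_permE, π.injective.mem_finset_image, Function.comp_apply]

lemma cocoLoss_permE (π : Equiv.Perm V) (E : Finset (V × V)) (r : V) (c : ℕ) (p : V)
    (μ : V → ℝ) :
    cocoLoss (permE π E) (π r) c (π p) μ = cocoLoss E r c p (μ ∘ π) := by
  rw [cocoLoss, cocoLoss, ← Equiv.sum_comp π, xi_permE]
  simp only [xi_permE]

end Relabelling

open Real in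
theorem hasDerivAt_neg_log_softmax {ι : Type*} [Fintype ι] {f : ι → ℝ → ℝ} {f' : ι → ℝ}
    {x : ℝ} (hf : ∀ i, HasDerivAt (f i) (f' i) x) (p : ι) :
    HasDerivAt (fun x => -log (exp (f p x) / ∑ i, exp (f i x)))
      (-f' p + (∑ i, f' i * exp (f i x)) / ∑ i, exp (f i x)) x := by
  have hZ : ∀ y, 0 < ∑ i, exp (f i y) :=
    fun y => Finset.sum_pos (fun i _ => exp_pos _) ⟨p, Finset.mem_univ p⟩
  have hloss : (fun x => -log (exp (f p x) / ∑ i, exp (f i x)))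
      = fun x => log (∑ i, exp (f i x)) - f p x := by
    funext y
    rw [log_div (exp_ne_zero _) (hZ y).ne', log_exp]
    ring
  have hsum : HasDerivAt (fun x => ∑ i, exp (f i x)) (∑ i, exp (f i x) * f' i) x :=
    HasDerivAt.fun_sum fun i _ => (hf i).exp
  rw [hloss]
  refine ((hsum.log (hZ x).ne').fun_sub (hf p)).congr_deriv ?_
  simp only [mul_comm (exp _)]
  ring

section Gradient

variable [Fintype V] [DecidableEq V]

/-- `∂ξ_w/∂μ_u`. -/
noncomputable def xiDeriv (E : Finset (V × V)) (r : V) (c : ℕ) (u w : V) : ℝ :=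
  lamc E r c * if u ∈ (ball E r c).filter (fun u' => (u', w) ∈ E) then 1 else 0

lemma hasDerivAt_xi_update (E : Finset (V × V)) (r : V) (c : ℕ) (μ : V → ℝ) (u w : V)
    (x : ℝ) :
    HasDerivAt (fun x => xi E r c (Function.update μ u x) w) (xiDeriv E r c u w) x := by
  have hcoord := hasDerivAt_pi.1 (hasDerivAt_update μ u x)
  have hsum := (HasDerivAt.fun_sum (u := (ball E r c).filter (fun u' => (u', w) ∈ E))
    fun u' _ => hcoord u').const_mul (lamc E r c)
  rw [Finset.sum_pi_single'] at hsum
  exact hsum.const_add _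

lemma sum_xiDeriv (E : Finset (V × V)) (r : V) (c : ℕ) (w : V) :
    ∑ u, xiDeriv E r c u w = lamc E r c * degc E r c w := by
  simp only [xiDeriv]
  rw [← Finset.mul_sum, Finset.sum_boole, Finset.filter_univ_mem, degc]

noncomputable def cocoGrad (E : Finset (V × V)) (r : V) (c : ℕ) (p : V) (μ : V → ℝ) (u : V) :
    ℝ :=
  -xiDeriv E r c u p + (∑ w, xiDeriv E r c u w * Real.exp (xi E r c μ w))
    / ∑ w, Real.exp (xi E r c μ w)

lemma hasDerivAt_cocoLoss_update (E : Finset (V × V)) (r : V) (c : ℕ) (p : V) (μ : V → ℝ)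
    (u : V) :
    HasDerivAt (fun x => cocoLoss E r c p (Function.update μ u x)) (cocoGrad E r c p μ u)
      (μ u) := by
  have h := hasDerivAt_neg_log_softmax (fun w => hasDerivAt_xi_update E r c μ u w (μ u)) p
  rw [Function.update_eq_self] at h
  exact h

lemma sum_cocoGrad (E : Finset (V × V)) (r : V) (c : ℕ) (p : V) (μ : V → ℝ) :
    ∑ u, cocoGrad E r c p μ u = lamc E r c * (-(degc E r c p : ℝ)
      + (∑ w, (degc E r c w : ℝ) * Real.exp (xi E r c μ w)) / ∑ w, Real.exp (xi E r c μ w)) := by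
  have hnum : ∑ u, ∑ w, xiDeriv E r c u w * Real.exp (xi E r c μ w)
      = lamc E r c * ∑ w, (degc E r c w : ℝ) * Real.exp (xi E r c μ w) := by
    rw [Finset.sum_comm, Finset.mul_sum]
    simp only [← Finset.sum_mul, sum_xiDeriv, mul_assoc]
  simp only [cocoGrad, Finset.sum_add_distrib, Finset.sum_neg_distrib, sum_xiDeriv,
    ← Finset.sum_div, hnum]
  ring

end Gradient

theorem Equiv.Perm.card_nsmul_sum_apply {α M : Type*} [Fintype α] [DecidableEq α]
    [AddCommMonoid M] (f : α → M) (a : α) :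
    Fintype.card α • ∑ σ : Equiv.Perm α, f (σ a) = (Fintype.card α).factorial • ∑ b, f b := by
  have hindep : ∀ b, ∑ σ : Equiv.Perm α, f (σ b) = ∑ σ : Equiv.Perm α, f (σ a) := fun b => by
    rw [← Equiv.sum_comp (Equiv.mulRight (Equiv.swap b a))]
    simp only [Equiv.coe_mulRight, Equiv.Perm.mul_apply, Equiv.swap_apply_left]
  calc Fintype.card α • ∑ σ : Equiv.Perm α, f (σ a)
      = ∑ b, ∑ σ : Equiv.Perm α, f (σ b) := by
        rw [Finset.sum_congr rfl fun b _ => hindep b, Finset.sum_const, Finset.card_univ]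
    _ = ∑ σ : Equiv.Perm α, ∑ b, f b :=
        Finset.sum_comm.trans (Finset.sum_congr rfl fun σ _ => Equiv.sum_comp σ f)
    _ = (Fintype.card α).factorial • ∑ b, f b := by
        rw [Finset.sum_const, Finset.card_univ, Fintype.card_perm]

section Average

variable [Fintype V] [DecidableEq V]

lemma hasDerivAt_avgCocoLoss_update (E : Finset (V × V)) (r : V) (c : ℕ) (p : V)
    (μ : V → ℝ) (v : V) :
    HasDerivAt (fun x => avgCocoLoss E r c p (Function.update μ v x))
      ((Nat.factorial (Fintype.card V) : ℝ)⁻¹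
        * ∑ π : Equiv.Perm V, cocoGrad E r c p (μ ∘ π) (π.symm v))
      (μ v) := by
  refine HasDerivAt.const_mul _ (HasDerivAt.fun_sum fun π _ => ?_)
  have h := hasDerivAt_cocoLoss_update E r c p (μ ∘ π) (π.symm v)
  simp only [Function.comp_apply, Equiv.apply_symm_apply] at h
  simpa only [cocoLoss_permE, Function.update_comp_equiv] using h

lemma hasDerivAt_avgCocoLoss_update_of_const (E : Finset (V × V)) (r : V) (c : ℕ) (p : V)
    (μ : V → ℝ) (μbar : ℝ) (hμ : ∀ u, μ u = μbar) (v : V) :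
    HasDerivAt (fun x => avgCocoLoss E r c p (Function.update μ v x))
      ((Fintype.card V : ℝ)⁻¹ * ∑ u, cocoGrad E r c p μ u) (μ v) := by
  have hcomp : ∀ π : Equiv.Perm V, μ ∘ π = μ := fun π => funext fun u => by simp [hμ]
  have : Nonempty V := ⟨v⟩
  have hsum := Equiv.Perm.card_nsmul_sum_apply (cocoGrad E r c p μ) v
  rw [← Equiv.sum_comp (Equiv.inv (Equiv.Perm V))] at hsum
  simp only [nsmul_eq_mul, Equiv.inv_apply, Equiv.Perm.inv_def] at hsum
  convert hasDerivAt_avgCocoLoss_update E r c p μ v using 1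
  simp only [hcomp]
  field_simp
  rw [hsum, mul_comm]

end Average

section Support

variable [Fintype V] [DecidableEq V] {E : Finset (V × V)} {r : V} {c : ℕ} {w : V}

lemma ball_subset_ball_succ (j : ℕ) : ball E r j ⊆ ball E r (j + 1) := fun u hu => by
  simp only [ball, Finset.mem_filter, Finset.mem_univ, true_and]
  exact Or.inl hu

lemma filter_ball_eq_empty_of_notMem_ball_succ (hw : w ∉ ball E r (c + 1)) :
    (ball E r c).filter (fun u => (u, w) ∈ E) = ∅ := by
  simp only [ball, Finset.mem_filter, Finset.mem_univ, true_and, not_or, not_exists,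
    not_and] at hw
  exact Finset.filter_eq_empty_iff.2 hw.2

lemma xi_eq_zero_of_notMem_ball_succ (μ : V → ℝ) (hw : w ∉ ball E r (c + 1)) :
    xi E r c μ w = 0 := by
  have hwc : w ∉ ball E r c := fun h => hw (ball_subset_ball_succ c h)
  simp [xi, hwc, filter_ball_eq_empty_of_notMem_ball_succ hw]

lemma degc_eq_zero_of_notMem_ball_succ (hw : w ∉ ball E r (c + 1)) : degc E r c w = 0 := by
  simp [degc, filter_ball_eq_empty_of_notMem_ball_succ hw]

variable (E r c)

lemma sum_exp_xi_eq (μ : V → ℝ) :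
    ∑ w, Real.exp (xi E r c μ w) = ∑ w ∈ ball E r (c + 1), Real.exp (xi E r c μ w)
      + ((Fintype.card V : ℝ) - ((ball E r (c + 1)).card : ℝ)) := by
  rw [← Finset.sum_add_sum_compl (ball E r (c + 1))]
  congr 1
  rw [Finset.sum_congr rfl fun w hw => by
      rw [xi_eq_zero_of_notMem_ball_succ μ (Finset.mem_compl.1 hw), Real.exp_zero],
    Finset.sum_const, nsmul_one, Finset.card_compl, Nat.cast_sub (Finset.card_le_univ _)]

lemma sum_degc_mul_eq (f : V → ℝ) :
    ∑ w, (degc E r c w : ℝ) * f w = ∑ w ∈ ball E r (c + 1), (degc E r c w : ℝ) * f w :=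
  (Finset.sum_subset (Finset.subset_univ _) fun w _ hw => by
    rw [degc_eq_zero_of_notMem_ball_succ hw, Nat.cast_zero, zero_mul]).symm

end Support

theorem stmt6_general {V : Type*} [Fintype V] [DecidableEq V]
    (E : Finset (V × V)) (r : V) (c : ℕ)
    (p : V)
    (μ : V → ℝ) (μbar : ℝ) (hμ : ∀ u : V, μ u = μbar) :
    ∀ v : V,
      HasDerivAt (fun x => avgCocoLoss E r c p (Function.update μ v x))
        ((1 / ((Fintype.card V : ℝ) * Real.sqrt ((ball E r c).card : ℝ)))
          * (-(degc E r c p : ℝ)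
              + (∑ u ∈ ball E r (c + 1), (degc E r c u : ℝ) * Real.exp (xi E r c μ u))
                / ((∑ w ∈ ball E r (c + 1), Real.exp (xi E r c μ w))
                    + ((Fintype.card V : ℝ) - ((ball E r (c + 1)).card : ℝ)))))
        (μ v) := by
  intro v
  convert hasDerivAt_avgCocoLoss_update_of_const E r c p μ μbar hμ v using 1
  rw [sum_cocoGrad, sum_exp_xi_eq, sum_degc_mul_eq, lamc]
  ring

/-- gradient of the permutation-averaged coconut loss when all coordinates
of μ are equal; the value is independent of the coordinate v. -/
theorem stmt6 {V : Type*} [Fintype V] [DecidableEq V]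
    (E : Finset (V × V)) (r : V) (c : ℕ)
    (p : V) (hp : p ∈ ball E r (c + 1)) (hdp : 1 ≤ degc E r c p)
    (μ : V → ℝ) (μbar : ℝ) (hμ : ∀ u : V, μ u = μbar) :
    ∀ v : V,
      HasDerivAt (fun x => avgCocoLoss E r c p (Function.update μ v x))
        ((1 / ((Fintype.card V : ℝ) * Real.sqrt ((ball E r c).card : ℝ)))
          * (-(degc E r c p : ℝ)
              + (∑ u ∈ ball E r (c + 1), (degc E r c u : ℝ) * Real.exp (xi E r c μ u))
                / ((∑ w ∈ ball E r (c + 1), Real.exp (xi E r c μ w))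
                    + ((Fintype.card V : ℝ) - ((ball E r (c + 1)).card : ℝ)))))
        (μ v) :=
  stmt6_general E r c p μ μbar hμ
end

section
/- Assume c0 ≥ 1 and d_max ≥ 1. Then the function F : ℝ → ℝ is infinitely differentiable and strictly increasing on ℝ, satisfies lim_{μ → −∞} F(μ) = 0 and lim_{μ → +∞} F(μ) = d_max, and satisfies 0 < F(μ) < d_max for every μ ∈ ℝ. -/
open Finset Filter Matrix

variable {V : Type*}

section Aux
variable [Fintype V] [DecidableEq V] (E : Finset (V × V)) (r : V) (c : ℕ)

lemma root_mem_ball : ∀ c : ℕ, r ∈ ball E r c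
  | 0 => by simp [ball]
  | j + 1 => by simp [ball]; exact Or.inl (root_mem_ball j)

lemma lamc_pos : 0 < lamc E r c := by
  have h : 0 < ((ball E r c).card : ℝ) := by
    exact_mod_cast Finset.card_pos.2 ⟨r, root_mem_ball E r c⟩
  exact one_div_pos.2 (Real.sqrt_pos.2 h)

lemma mem_ball_succ_of_degc_pos {v : V} (h : 0 < degc E r c v) : v ∈ ball E r (c + 1) := by
  obtain ⟨u, hu⟩ := Finset.card_pos.1 h
  simp only [Finset.mem_filter] at hu
  simp [ball]
  exact Or.inr ⟨u, hu.1, hu.2⟩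

noncomputable def gf (u : V) (x : ℝ) : ℝ :=
  Real.exp (lamc E r c * ((if u ∈ ball E r c then 1 else 0) + x * (degc E r c u : ℝ)))

lemma hasDerivAt_gf (u : V) (x : ℝ) :
    HasDerivAt (gf E r c u) (lamc E r c * (degc E r c u : ℝ) * gf E r c u x) x := by
  have h1 : HasDerivAt (fun x : ℝ => lamc E r c *
      ((if u ∈ ball E r c then 1 else 0) + x * (degc E r c u : ℝ)))
      (lamc E r c * (degc E r c u : ℝ)) x := by
    simpa using (((hasDerivAt_id x).mul_const
      ((degc E r c u : ℝ))).const_add (if u ∈ ball E r c then (1:ℝ) else 0)).const_mul (lamc E r c)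
  have := (Real.hasDerivAt_exp _).comp x h1
  show HasDerivAt (fun x => gf E r c u x) _ x
  simpa [gf, mul_comm, Function.comp_def] using this

lemma contDiff_gf (u : V) : ContDiff ℝ (⊤ : ℕ∞) (gf E r c u) := by
  apply Real.contDiff_exp.comp
  fun_prop

noncomputable def Sn (x : ℝ) : ℝ :=
  ∑ u ∈ ball E r (c + 1), (degc E r c u : ℝ) * gf E r c u x

noncomputable def Dn (x : ℝ) : ℝ :=
  (∑ u ∈ ball E r (c + 1), gf E r c u x)
    + ((Fintype.card V : ℝ) - ((ball E r (c + 1)).card : ℝ))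

lemma Fc_eq : Fc E r c = fun x => Sn E r c x / Dn E r c x := rfl

end Aux

/-- regularity of F: it is C^∞, strictly increasing, tends to 0 at −∞,
tends to d_max at +∞, and satisfies 0 < F(μ) < d_max for every real μ. -/
theorem stmt8 {V : Type*} [Fintype V] [DecidableEq V]
    (E : Finset (V × V)) (r : V) (c : ℕ)
    (hc0 : (ball E r (c + 1)).card + 1 ≤ Fintype.card V)
    (hdmax : 1 ≤ Finset.univ.sup (degc E r c)) :
    ContDiff ℝ (⊤ : ℕ∞) (Fc E r c)
    ∧ StrictMono (Fc E r c)
    ∧ Filter.Tendsto (Fc E r c) Filter.atBot (nhds 0)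
    ∧ Filter.Tendsto (Fc E r c) Filter.atTop
        (nhds (((Finset.univ.sup (degc E r c) : ℕ) : ℝ)))
    ∧ ∀ x : ℝ, 0 < Fc E r c x ∧ Fc E r c x < ((Finset.univ.sup (degc E r c) : ℕ) : ℝ) := by
  classical
  set B := ball E r (c + 1) with hBdef
  set lam := lamc E r c with hlamdef
  set d : V → ℝ := fun u => (degc E r c u : ℝ) with hddef
  set mnat := Finset.univ.sup (degc E r c) with hmdef
  set m : ℝ := (mnat : ℝ) with hmRdef
  have hlampos : 0 < lam := lamc_pos E r c
  obtain ⟨v, -, hv⟩ := Finset.exists_mem_eq_sup (Finset.univ : Finset V)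
    ⟨r, Finset.mem_univ r⟩ (degc E r c)
  have hdv : degc E r c v = mnat := hv.symm
  have hvpos : 0 < degc E r c v := by omega
  have hvB : v ∈ B := mem_ball_succ_of_degc_pos E r c hvpos
  have hdle : ∀ u, d u ≤ m := fun u => Nat.cast_le.2 (Finset.le_sup (Finset.mem_univ u))
  have hm1 : (1 : ℝ) ≤ m := Nat.one_le_cast.2 hdmax
  set c0 : ℝ := (Fintype.card V : ℝ) - (B.card : ℝ) with hc0def
  have hc1 : (1 : ℝ) ≤ c0 := by
    have : (B.card : ℝ) + 1 ≤ (Fintype.card V : ℝ) := by exact_mod_cast hc0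
    simp only [hc0def]; linarith
  have hgpos : ∀ u x, 0 < gf E r c u x := fun u x => Real.exp_pos _
  have hA0pos : ∀ x : ℝ, 0 < ∑ u ∈ B, gf E r c u x :=
    fun x => Finset.sum_pos (fun u _ => hgpos u x) ⟨v, hvB⟩
  have hDeq : ∀ x : ℝ, Dn E r c x = (∑ u ∈ B, gf E r c u x) + c0 := fun x => rfl
  have hDpos : ∀ x : ℝ, 0 < Dn E r c x := by
    intro x; rw [hDeq]; have := hA0pos x; linarith
  have hdv1 : (1 : ℝ) ≤ d v := by
    have h : 1 ≤ degc E r c v := hvpos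
    simp only [hddef]
    exact_mod_cast h
  have hSpos : ∀ x : ℝ, 0 < Sn E r c x := by
    intro x
    apply Finset.sum_pos' (fun u _ => mul_nonneg (Nat.cast_nonneg _) (hgpos u x).le)
    exact ⟨v, hvB, mul_pos (by linarith) (hgpos v x)⟩
  -- derivatives
  have hSder : ∀ x : ℝ, HasDerivAt (Sn E r c) (lam * ∑ u ∈ B, d u ^ 2 * gf E r c u x) x := by
    intro x
    have h := HasDerivAt.fun_sum (fun u (_ : u ∈ B) => (hasDerivAt_gf E r c u x).const_mul (d u))
    refine h.congr_deriv ?_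
    rw [Finset.mul_sum]
    exact Finset.sum_congr rfl fun u _ => by ring
  have hDder : ∀ x : ℝ, HasDerivAt (Dn E r c) (lam * Sn E r c x) x := by
    intro x
    have h := (HasDerivAt.fun_sum (fun u (_ : u ∈ B) => hasDerivAt_gf E r c u x)).add_const
      ((Fintype.card V : ℝ) - (B.card : ℝ))
    refine h.congr_deriv ?_
    rw [Sn, Finset.mul_sum]
    exact Finset.sum_congr rfl fun u _ => by ring
  have hFder : ∀ x : ℝ, HasDerivAt (Fc E r c)
      ((lam * (∑ u ∈ B, d u ^ 2 * gf E r c u x) * Dn E r c x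
        - Sn E r c x * (lam * Sn E r c x)) / (Dn E r c x) ^ 2) x := by
    intro x
    rw [Fc_eq]
    exact (hSder x).div (hDder x) (hDpos x).ne'
  have hA2pos : ∀ x : ℝ, 0 < ∑ u ∈ B, d u ^ 2 * gf E r c u x := by
    intro x
    apply Finset.sum_pos' (fun u _ => mul_nonneg (sq_nonneg _) (hgpos u x).le)
    exact ⟨v, hvB, mul_pos (by nlinarith) (hgpos v x)⟩
  have hCS : ∀ x : ℝ, (Sn E r c x) ^ 2
      ≤ (∑ u ∈ B, d u ^ 2 * gf E r c u x) * (∑ u ∈ B, gf E r c u x) := by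
    intro x
    have h := Finset.sum_mul_sq_le_sq_mul_sq B
      (fun u => d u * Real.sqrt (gf E r c u x)) (fun u => Real.sqrt (gf E r c u x))
    calc (Sn E r c x) ^ 2
        = (∑ u ∈ B, (d u * Real.sqrt (gf E r c u x)) * Real.sqrt (gf E r c u x)) ^ 2 := by
          congr 1
          exact Finset.sum_congr rfl fun u _ => by
            rw [mul_assoc, Real.mul_self_sqrt (hgpos u x).le]
      _ ≤ (∑ u ∈ B, (d u * Real.sqrt (gf E r c u x)) ^ 2)
            * (∑ u ∈ B, (Real.sqrt (gf E r c u x)) ^ 2) := h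
      _ = _ := by
          congr 1
          · exact Finset.sum_congr rfl fun u _ => by
              rw [mul_pow, Real.sq_sqrt (hgpos u x).le]
          · exact Finset.sum_congr rfl fun u _ => Real.sq_sqrt (hgpos u x).le
  have hderivpos : ∀ x : ℝ, 0 < deriv (Fc E r c) x := by
    intro x
    rw [(hFder x).deriv]
    apply div_pos _ (pow_pos (hDpos x) 2)
    have h1 := hCS x
    have h2 := hA2pos x
    have h3 := hA0pos x
    rw [hDeq]
    have hc0pos : (0:ℝ) < c0 := by linarith
    nlinarith [mul_le_mul_of_nonneg_left h1 hlampos.le, mul_pos (mul_pos hlampos h2) hc0pos]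
  refine ⟨?_, ?_, ?_, ?_, ?_⟩
  · -- smooth
    rw [Fc_eq]
    apply ContDiff.div
    · exact ContDiff.sum fun u _ => contDiff_const.mul (contDiff_gf E r c u)
    · exact (ContDiff.sum fun u _ => contDiff_gf E r c u).add contDiff_const
    · exact fun x => (hDpos x).ne'
  · exact strictMono_of_deriv_pos hderivpos
  · -- atBot
    have hSn0 : Tendsto (Sn E r c) atBot (nhds 0) := by
      have : Tendsto (fun x => ∑ u ∈ B, d u * gf E r c u x) atBot (nhds (∑ u ∈ B, (0:ℝ))) := by
        apply tendsto_finset_sum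
        intro u _
        rcases Nat.eq_zero_or_pos (degc E r c u) with h0 | hpos
        · simp only [hddef, h0, Nat.cast_zero, zero_mul]
          exact tendsto_const_nhds
        · have hdu : (0:ℝ) < d u := by
            simp only [hddef]; exact_mod_cast hpos
          have hexp : Tendsto (fun x : ℝ => lam *
              ((if u ∈ ball E r c then 1 else 0) + x * d u)) atBot atBot := by
            have h1 : Tendsto (fun x : ℝ => (lam * d u) * x
                + lam * (if u ∈ ball E r c then 1 else 0)) atBot atBot :=
              tendsto_atBot_add_const_right _ _
                ((tendsto_const_mul_atBot_of_pos (mul_pos hlampos hdu)).2 tendsto_id)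
            refine h1.congr fun x => by ring
          have hg0 : Tendsto (fun x => gf E r c u x) atBot (nhds 0) := by
            have := Real.tendsto_exp_atBot.comp hexp
            refine this.congr fun x => ?_
            simp only [Function.comp, gf, hlamdef, hddef]
          simpa using hg0.const_mul (d u)
      rw [Finset.sum_const_zero] at this; exact this
    have hle : ∀ x : ℝ, Fc E r c x ≤ Sn E r c x / c0 := by
      intro x
      rw [Fc_eq]
      have hc0pos : (0:ℝ) < c0 := by linarith
      apply div_le_div_of_nonneg_left (hSpos x).le hc0pos
      rw [hDeq]
      linarith [hA0pos x]
    have hge : ∀ x : ℝ, 0 ≤ Fc E r c x := by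
      intro x; rw [Fc_eq]; exact (div_pos (hSpos x) (hDpos x)).le
    exact squeeze_zero hge hle (by simpa using hSn0.div_const c0)
  · -- atTop
    have hFeq : ∀ x : ℝ, Fc E r c x = (Sn E r c x * Real.exp (-(lam * m) * x))
        / (Dn E r c x * Real.exp (-(lam * m) * x)) := by
      intro x
      rw [Fc_eq, mul_div_mul_right _ _ (Real.exp_ne_zero _)]
    set L : V → ℝ := fun u => if degc E r c u = mnat
      then Real.exp (lam * (if u ∈ ball E r c then 1 else 0)) else 0 with hLdef
    have hterm : ∀ u : V, Tendsto (fun x => gf E r c u x * Real.exp (-(lam * m) * x))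
        atTop (nhds (L u)) := by
      intro u
      have heq : ∀ x : ℝ, gf E r c u x * Real.exp (-(lam * m) * x)
          = Real.exp (lam * (if u ∈ ball E r c then 1 else 0) + (lam * (d u - m)) * x) := by
        intro x
        simp only [gf, hlamdef, hddef, hmRdef, ← Real.exp_add]
        congr 1
        ring
      rw [tendsto_congr heq]
      by_cases hu : degc E r c u = mnat
      · have hdm : d u = m := by simp only [hddef, hmRdef, hu]
        simp only [hdm, sub_self, mul_zero, zero_mul, add_zero, hLdef, if_pos hu]
        exact tendsto_const_nhds
      · have hlt : d u < m := lt_of_le_of_ne (hdle u) (by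
          simp only [hddef, hmRdef]
          exact_mod_cast hu)
        have hneg : lam * (d u - m) < 0 := mul_neg_of_pos_of_neg hlampos (by linarith)
        have hbot : Tendsto (fun x : ℝ => lam * (if u ∈ ball E r c then 1 else 0)
            + (lam * (d u - m)) * x) atTop atBot :=
          tendsto_atBot_add_const_left _ _
            ((tendsto_const_mul_atBot_of_neg hneg).2 tendsto_id)
        have hcomp := Real.tendsto_exp_atBot.comp hbot
        simp only [hLdef, if_neg hu]
        exact hcomp
    have hnum : Tendsto (fun x => Sn E r c x * Real.exp (-(lam * m) * x)) atTop
        (nhds (∑ u ∈ B, d u * L u)) := by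
      have heq : ∀ x : ℝ, Sn E r c x * Real.exp (-(lam * m) * x)
          = ∑ u ∈ B, d u * (gf E r c u x * Real.exp (-(lam * m) * x)) := by
        intro x
        rw [Sn, Finset.sum_mul]
        exact Finset.sum_congr rfl fun u _ => by rw [hddef]; ring
      rw [tendsto_congr heq]
      exact tendsto_finset_sum _ fun u _ => (hterm u).const_mul (d u)
    have hden : Tendsto (fun x => Dn E r c x * Real.exp (-(lam * m) * x)) atTop
        (nhds (∑ u ∈ B, L u)) := by
      have heq : ∀ x : ℝ, Dn E r c x * Real.exp (-(lam * m) * x)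
          = (∑ u ∈ B, gf E r c u x * Real.exp (-(lam * m) * x))
            + c0 * Real.exp (-(lam * m) * x) := by
        intro x
        rw [hDeq, add_mul, Finset.sum_mul]
      rw [tendsto_congr heq]
      have h0 : Tendsto (fun x : ℝ => c0 * Real.exp (-(lam * m) * x)) atTop (nhds 0) := by
        have hneg : -(lam * m) < 0 := by nlinarith
        have hE : Tendsto (fun x : ℝ => Real.exp (-(lam * m) * x)) atTop (nhds 0) :=
          Real.tendsto_exp_atBot.comp ((tendsto_const_mul_atBot_of_neg hneg).2 tendsto_id)
        simpa using hE.const_mul c0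
      simpa using (tendsto_finset_sum _ fun u _ => hterm u).add h0
    have hLnonneg : ∀ u ∈ B, 0 ≤ L u := by
      intro u _
      by_cases h : degc E r c u = mnat <;> simp [hLdef, h, (Real.exp_pos _).le]
    have hLsum_pos : 0 < ∑ u ∈ B, L u := by
      refine Finset.sum_pos' hLnonneg ⟨v, hvB, ?_⟩
      simp only [hLdef, hdv, if_pos rfl]
      exact Real.exp_pos _
    have hsum_eq : ∑ u ∈ B, d u * L u = m * ∑ u ∈ B, L u := by
      rw [Finset.mul_sum]
      refine Finset.sum_congr rfl fun u _ => ?_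
      by_cases h : degc E r c u = mnat
      · have hdm : d u = m := by simp only [hddef, hmRdef, h]
        rw [hdm]
      · simp [hLdef, if_neg h]
    have hdiv := hnum.div hden hLsum_pos.ne'
    rw [hsum_eq, mul_div_assoc, div_self hLsum_pos.ne', mul_one] at hdiv
    exact hdiv.congr fun x => (hFeq x).symm
  · -- bounds
    intro x
    constructor
    · rw [Fc_eq]
      exact div_pos (hSpos x) (hDpos x)
    · rw [Fc_eq]
      rw [div_lt_iff₀ (hDpos x)]
      have h1 : Sn E r c x ≤ m * ∑ u ∈ B, gf E r c u x := by
        rw [Finset.mul_sum]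
        exact Finset.sum_le_sum fun u _ =>
          mul_le_mul_of_nonneg_right (hdle u) (hgpos u x).le
      rw [hDeq]
      nlinarith [hA0pos x]
end
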